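/- Let C be a set of points in convex position and q a point strictly inside the convex hull of C. If S ∪ {qp1} has no pair of crossing CC-segments (segments with both endpoints in C), and qp1 crosses some CC-segments, then flipping qp1 with the CC-segment p2p3 crossing it farthest from q inserts a CC-segment (p1p2 or p1p3) that crosses no segment of the resulting set. -/

import Mathlib

noncomputable section
open scoped Classical

abbrev Pt := EuclideanSpace ℝ (Fin 2)

def SegCross (a b c d : Pt) : Prop :=
  ∃ x, x ∈ openSegment ℝ a b ∧ x ∈ openSegment ℝ c d ∧
    ∀ y ∈ segment ℝ a b, y ∈ segment ℝ c d → y = x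

def ConvexPos (P : Set Pt) : Prop := ∀ p ∈ P, p ∉ convexHull ℝ (P \ {p})

/-!
Let `x` be the crossing point of `q p1` and `p2 p3`. It is interior to the hull of `C`, so it is
not a point of `C`, and `x p1 p3` is a genuine triangle. Suppose a segment `a b` of `S` crossed
`p1 p3` at `z`, with `a` on the side of `x`. Walking from `z` towards `a` we enter the triangle, and
either `a` itself lies in the triangle, hence in the interior of the hull of `C`; or we leave
through the side `x p3 ⊆ p2 p3`, so `a b` meets `p2 p3` without crossing it, which puts `a` on the
line `p2 p3` although it lies strictly beyond it; or we leave through the side `x p1`, at a point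
of `a b` on `q p1` farther from `q` than `x`. In barycentric coordinates for `x p1 p3` this
trichotomy is a statement about two affine functions on `[0, 1]` that start positive.
-/

open Set

def det3 (u v w : Pt) : ℝ := (v 0 - u 0) * (w 1 - u 1) - (v 1 - u 1) * (w 0 - u 0)

lemma det3_rotate (u v w : Pt) : det3 u v w = det3 v w u := by
  simp only [det3]; ring

lemma det3_swap (u v w : Pt) : det3 u v w = -det3 u w v := by
  simp only [det3]; ring

@[simp] lemma det3_self_left (u v : Pt) : det3 u v u = 0 := by
  simp only [det3]; ring

@[simp] lemma det3_self_right (u v : Pt) : det3 u v v = 0 := by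
  simp only [det3]; ring

lemma det3_combo (u v : Pt) {a b : ℝ} (y y' : Pt) (hab : a + b = 1) :
    det3 u v (a • y + b • y') = a * det3 u v y + b * det3 u v y' := by
  obtain rfl : b = 1 - a := by linarith
  simp only [det3, PiLp.add_apply, PiLp.smul_apply, smul_eq_mul]
  ring

lemma det3_eq_zero_of_mem_segment {u v w : Pt} (h : w ∈ segment ℝ u v) : det3 u v w = 0 := by
  obtain ⟨a, b, -, -, hab, rfl⟩ := h
  simp [det3_combo u v u v hab]

lemma eq_of_sub_apply_eq_zero {u v : Pt} (h0 : v 0 - u 0 = 0) (h1 : v 1 - u 1 = 0) : u = v := by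
  ext i
  fin_cases i <;> simp <;> linarith

lemma sub_eq_smul_sub_of_det3_eq_zero {u v w : Pt} (huv : u ≠ v) (h : det3 u v w = 0) :
    ∃ μ : ℝ, w - u = μ • (v - u) := by
  simp only [det3] at h
  by_cases h0 : v 0 - u 0 = 0
  · have h1 : v 1 - u 1 ≠ 0 := fun h1 => huv (eq_of_sub_apply_eq_zero h0 h1)
    refine ⟨(w 1 - u 1) / (v 1 - u 1), ?_⟩
    ext i
    fin_cases i <;> simp <;> field_simp
    linear_combination -h
  · refine ⟨(w 0 - u 0) / (v 0 - u 0), ?_⟩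
    ext i
    fin_cases i <;> simp <;> field_simp
    linear_combination h

lemma det3_eq_zero_of_det3_eq_zero {u v a b : Pt} (huv : u ≠ v) (ha : det3 u v a = 0)
    (hb : det3 u v b = 0) : det3 v a b = 0 := by
  have h0 : (v 0 - u 0) * det3 v a b = (a 0 - v 0) * det3 u v b + (v 0 - b 0) * det3 u v a := by
    simp only [det3]; ring
  have h1 : (v 1 - u 1) * det3 v a b = (a 1 - v 1) * det3 u v b + (v 1 - b 1) * det3 u v a := by
    simp only [det3]; ring
  by_contra hne
  exact huv (eq_of_sub_apply_eq_zero (by simpa [ha, hb, hne] using h0)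
    (by simpa [ha, hb, hne] using h1))

/-- The barycentric coordinate of `y` at the vertex `u` of the triangle `u v w`; those at `v` and
`w` are `bary v w u y` and `bary w u v y`. -/
def bary (u v w y : Pt) : ℝ := det3 v w y / det3 u v w

section Bary

variable {u v w : Pt}

lemma bary_combo (u v w : Pt) {a b : ℝ} (y y' : Pt) (hab : a + b = 1) :
    bary u v w (a • y + b • y') = a * bary u v w y + b * bary u v w y' := by
  simp only [bary, det3_combo v w y y' hab]; ring

lemma bary_self (h : det3 u v w ≠ 0) : bary u v w u = 1 := by
  rw [bary, ← det3_rotate, div_self h]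

@[simp] lemma bary_second (u v w : Pt) : bary u v w v = 0 := by simp [bary]

@[simp] lemma bary_third (u v w : Pt) : bary u v w w = 0 := by simp [bary]

lemma bary_add_bary_add_bary (h : det3 u v w ≠ 0) (y : Pt) :
    bary u v w y + bary v w u y + bary w u v y = 1 := by
  rw [bary, bary, bary, ← det3_rotate u v w, det3_rotate w u v, ← add_div, ← add_div,
    div_eq_one_iff_eq h]
  simp only [det3]; ring

lemma bary_smul_add_bary_smul_add_bary_smul (h : det3 u v w ≠ 0) (y : Pt) :
    bary u v w y • u + bary v w u y • v + bary w u v y • w = y := by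
  have hy : det3 u v w • y = det3 v w y • u + det3 w u y • v + det3 u v y • w := by
    ext i
    fin_cases i <;>
      · simp only [det3, PiLp.add_apply, PiLp.smul_apply, smul_eq_mul, Fin.mk_zero, Fin.mk_one]
        ring
  rw [bary, bary, bary, ← det3_rotate u v w, det3_rotate w u v, div_eq_inv_mul, div_eq_inv_mul,
    div_eq_inv_mul, ← smul_smul, ← smul_smul, ← smul_smul, ← smul_add, ← smul_add, ← hy, smul_smul,
    inv_mul_cancel₀ h, one_smul]

end Bary

namespace ConvexPos

variable {P : Set Pt}

lemma notMem_segment (hP : ConvexPos P) {u v p : Pt} (hu : u ∈ P) (hv : v ∈ P) (hp : p ∈ P)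
    (hpu : p ≠ u) (hpv : p ≠ v) : p ∉ segment ℝ u v := fun hseg =>
  hP p hp <|
    segment_subset_convexHull (mem_sdiff_singleton.2 ⟨hu, hpu.symm⟩)
      (mem_sdiff_singleton.2 ⟨hv, hpv.symm⟩) hseg

lemma det3_ne_zero (hP : ConvexPos P) {u v w : Pt} (hu : u ∈ P) (hv : v ∈ P) (hw : w ∈ P)
    (huv : u ≠ v) (huw : u ≠ w) (hvw : v ≠ w) : det3 u v w ≠ 0 := by
  intro h
  obtain ⟨μ, hμ⟩ := sub_eq_smul_sub_of_det3_eq_zero huv h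
  have hcol : Collinear ℝ ({u, v, w} : Set Pt) := by
    rw [collinear_iff_of_mem (mem_insert u _)]
    refine ⟨v - u, ?_⟩
    simp only [mem_insert_iff, mem_singleton_iff, forall_eq_or_imp, forall_eq]
    exact ⟨⟨0, by simp⟩, ⟨1, by simp⟩, ⟨μ, by rw [← hμ]; simp⟩⟩
  rcases hcol.wbtw_or_wbtw_or_wbtw with h | h | h
  · exact hP.notMem_segment hu hw hv huv.symm hvw h.mem_segment
  · exact hP.notMem_segment hv hu hw hvw.symm huw.symm h.mem_segment
  · exact hP.notMem_segment hw hv hu huw huv h.mem_segment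

open Filter Topology in
lemma notMem_interior_convexHull (hP : ConvexPos P) {p : Pt} (hp : p ∈ P) :
    p ∉ interior (convexHull ℝ P) := by
  intro hint
  obtain ⟨c, hcP, hcp⟩ : ∃ c ∈ P, c ≠ p := by
    by_contra! h
    have hsub : convexHull ℝ P ⊆ {p} := convexHull_min (fun c hc => h c hc) (convex_singleton p)
    simpa [interior_singleton] using interior_mono hsub hint
  obtain ⟨δ, hmem, hδ⟩ : ∃ δ : ℝ, p + δ • (p - c) ∈ convexHull ℝ P ∧ 0 < δ := by
    have hlim : Tendsto (fun δ : ℝ => p + δ • (p - c)) (𝓝[>] 0) (𝓝 p) := by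
      refine tendsto_nhdsWithin_of_tendsto_nhds ?_
      simpa using ((tendsto_id (x := 𝓝 (0 : ℝ))).smul_const (p - c)).const_add p
    exact ((hlim.eventually (mem_interior_iff_mem_nhds.1 hint)).and self_mem_nhdsWithin).exists
  -- `p + δ • (p - c)` lies on a segment from `p` to `convexHull ℝ (P \ {p})`, which drags `p`
  -- itself into `convexHull ℝ (P \ {p})`
  rw [← insert_eq_of_mem hp, ← insert_sdiff_singleton,
    convexHull_insert ⟨c, mem_sdiff_singleton.2 ⟨hcP, hcp⟩⟩, mem_convexJoin] at hmem
  obtain ⟨p₀, hp₀, y, hy, s, t, -, ht, hst, hsy⟩ := hmem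
  rw [mem_singleton_iff] at hp₀
  rw [hp₀] at hsy
  have hpos : 0 < δ + t := by positivity
  have hcomb : (δ + t) • p = δ • c + t • y := by
    obtain rfl : s = 1 - t := by linarith
    linear_combination (norm := module) -hsy
  have hp_eq : p = (δ / (δ + t)) • c + (t / (δ + t)) • y := by
    rw [div_eq_inv_mul, div_eq_inv_mul, ← smul_smul, ← smul_smul, ← smul_add, ← hcomb, smul_smul,
      inv_mul_cancel₀ hpos.ne', one_smul]
  have hmem := convex_convexHull ℝ _ (subset_convexHull ℝ _ (mem_sdiff_singleton.2 ⟨hcP, hcp⟩)) hy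
    (div_nonneg hδ.le hpos.le) (div_nonneg ht hpos.le) (by rw [← add_div, div_self hpos.ne'])
  rw [← hp_eq] at hmem
  exact hP p hp hmem

end ConvexPos

section Segments

variable {E : Type*}

lemma mem_openSegment_of_mem_segment_of_ne [AddCommGroup E] [Module ℝ E] {p q x y : E}
    (hx : x ∈ openSegment ℝ p q) (hy : y ∈ segment ℝ x q) (hyq : y ≠ q) :
    y ∈ openSegment ℝ p q := by
  obtain ⟨s, t, hs, ht, hst, rfl⟩ := hx
  obtain ⟨α, γ, hα, hγ, hαγ, rfl⟩ := hy
  have hα : 0 < α := hα.lt_of_ne <| by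
    rintro rfl
    exact hyq (by simp [show γ = 1 by linarith])
  exact ⟨α * s, α * t + γ, by positivity, by positivity, by linear_combination α * hst + hαγ,
    by module⟩

lemma openSegment_subset_openSegment_of_mem [AddCommGroup E] [Module ℝ E] {a b z : E}
    (hz : z ∈ openSegment ℝ a b) : openSegment ℝ z a ⊆ openSegment ℝ a b := by
  obtain ⟨s, t, hs, ht, hst, rfl⟩ := hz
  rintro _ ⟨α, β, hα, hβ, hαβ, rfl⟩
  exact ⟨α * s + β, α * t, by positivity, by positivity, by linear_combination α * hst + hαβ,
    by module⟩

lemma dist_lt_dist_of_mem_segment [NormedAddCommGroup E] [NormedSpace ℝ E] {q u x y : E}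
    (hx : x ∈ segment ℝ q u) (hy : y ∈ segment ℝ x u) (hyx : y ≠ x) :
    y ∈ segment ℝ q u ∧ dist q x < dist q y := by
  rw [mem_segment_iff_wbtw] at hx hy ⊢
  refine ⟨hx.trans_right hy, ?_⟩
  rw [← (hx.trans_right_left hy).dist_add_dist]
  simpa using dist_pos.2 hyx.symm

end Segments

namespace SegCross

variable {a b c d : Pt}

lemma symm (h : SegCross a b c d) : SegCross c d a b :=
  let ⟨x, hab, hcd, huniq⟩ := h
  ⟨x, hcd, hab, fun y hcd' hab' => huniq y hab' hcd'⟩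

lemma swap_left (h : SegCross a b c d) : SegCross b a c d :=
  let ⟨x, hab, hcd, huniq⟩ := h
  ⟨x, openSegment_symm ℝ a b ▸ hab, hcd, fun y hba => huniq y (segment_symm ℝ a b ▸ hba)⟩

lemma swap_right (h : SegCross a b c d) : SegCross a b d c :=
  h.symm.swap_left.symm

lemma left_notMem_segment (h : SegCross a b c d) (hab : a ≠ b) : a ∉ segment ℝ c d := by
  obtain ⟨x, hx, -, huniq⟩ := h
  intro ha
  obtain rfl := huniq a (left_mem_segment ℝ a b) ha
  exact hab (left_mem_openSegment_iff.1 hx)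

end SegCross

lemma det3_eq_zero_of_not_segCross {a b c d w : Pt} (hwab : w ∈ openSegment ℝ a b)
    (hwcd : w ∈ openSegment ℝ c d) (hnc : ¬ SegCross a b c d) : det3 c d a = 0 := by
  by_contra ha
  refine hnc ⟨w, hwab, hwcd, fun y hyab hycd => ?_⟩
  have hw := det3_eq_zero_of_mem_segment (openSegment_subset_segment ℝ c d hwcd)
  have hy := det3_eq_zero_of_mem_segment hycd
  obtain ⟨σ, τ, -, -, hστ, rfl⟩ := hwab
  obtain ⟨σ', τ', -, -, hστ', rfl⟩ := hyab
  obtain rfl : σ = 1 - τ := by linarith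
  obtain rfl : σ' = 1 - τ' := by linarith
  rw [det3_combo _ _ _ _ hστ] at hw
  rw [det3_combo _ _ _ _ hστ'] at hy
  have hba : det3 c d b - det3 c d a ≠ 0 := fun h => ha (by linear_combination hw - τ * h)
  have hττ' : τ' = τ :=
    sub_eq_zero.1 <| (mul_eq_zero.1 (by linear_combination hy - hw)).resolve_right hba
  rw [hττ']

lemma ConvexPos.det3_ne_zero_of_segCross {P : Set Pt} (hP : ConvexPos P) {u v a b : Pt}
    (hu : u ∈ P) (hv : v ∈ P) (ha : a ∈ P) (huv : u ≠ v) (h : SegCross u v a b) :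
    det3 u v a ≠ 0 := by
  by_cases hau : a = u
  · exact absurd (hau ▸ left_mem_segment ℝ a b) (h.left_notMem_segment huv)
  by_cases hav : a = v
  · exact absurd (hav ▸ left_mem_segment ℝ a b) (h.swap_left.left_notMem_segment huv.symm)
  exact hP.det3_ne_zero hu hv ha huv (Ne.symm hau) (Ne.symm hav)

lemma exists_mem_Ioo_affine_eq_mul_sub {h₀ h₁ : ℝ} (h₀pos : 0 < h₀) (h₁neg : h₁ < 0) :
    ∃ τ ∈ Ioo (0 : ℝ) 1, ∀ t, (1 - t) * h₀ + t * h₁ = (h₀ - h₁) * (τ - t) := by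
  have hd : 0 < h₀ - h₁ := by linarith
  refine ⟨h₀ / (h₀ - h₁), ⟨by positivity, (div_lt_one hd).2 (by linarith)⟩, fun t => ?_⟩
  field_simp
  ring

lemma quadrant_exit {f₀ f₁ g₀ g₁ : ℝ} (hf₀ : 0 < f₀) (hg₀ : 0 < g₀) :
    (0 ≤ f₁ ∧ 0 ≤ g₁) ∨
    (f₁ < 0 ∧ ∃ t ∈ Ioo (0 : ℝ) 1, (1 - t) * f₀ + t * f₁ = 0 ∧ 0 ≤ (1 - t) * g₀ + t * g₁) ∨
    (∃ t ∈ Ioo (0 : ℝ) 1, (1 - t) * g₀ + t * g₁ = 0 ∧ 0 < (1 - t) * f₀ + t * f₁) := by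
  rcases le_or_gt 0 f₁ with hf₁ | hf₁ <;> rcases le_or_gt 0 g₁ with hg₁ | hg₁
  · exact Or.inl ⟨hf₁, hg₁⟩
  · obtain ⟨τ, hτ, hg⟩ := exists_mem_Ioo_affine_eq_mul_sub hg₀ hg₁
    refine Or.inr (Or.inr ⟨τ, hτ, by simp [hg], ?_⟩)
    exact add_pos_of_pos_of_nonneg (mul_pos (by linarith [hτ.2]) hf₀) (mul_nonneg hτ.1.le hf₁)
  · obtain ⟨τ, hτ, hf⟩ := exists_mem_Ioo_affine_eq_mul_sub hf₀ hf₁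
    refine Or.inr (Or.inl ⟨hf₁, τ, hτ, by simp [hf], ?_⟩)
    exact add_nonneg (mul_nonneg (by linarith [hτ.2]) hg₀.le) (mul_nonneg hτ.1.le hg₁)
  · obtain ⟨τf, hτf, hf⟩ := exists_mem_Ioo_affine_eq_mul_sub hf₀ hf₁
    obtain ⟨τg, hτg, hg⟩ := exists_mem_Ioo_affine_eq_mul_sub hg₀ hg₁
    rcases le_or_gt τf τg with hτ | hτ
    · refine Or.inr (Or.inl ⟨hf₁, τf, hτf, by simp [hf], ?_⟩)
      rw [hg]
      exact mul_nonneg (by linarith) (by linarith)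
    · refine Or.inr (Or.inr ⟨τg, hτg, by simp [hg], ?_⟩)
      rw [hf]
      exact mul_pos (by linarith) (by linarith)

lemma Convex.smul_add_smul_add_smul_mem_interior {E : Type*} [AddCommGroup E] [Module ℝ E]
    [TopologicalSpace E] [IsTopologicalAddGroup E] [ContinuousSMul ℝ E] {K : Set E}
    (hK : Convex ℝ K) {x u w : E} (hx : x ∈ interior K) (hu : u ∈ K) (hw : w ∈ K) {α β γ : ℝ}
    (hα : 0 < α) (hβ : 0 ≤ β) (hγ : 0 ≤ γ) (hαβγ : α + β + γ = 1) :
    α • x + β • u + γ • w ∈ interior K := by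
  rcases (add_nonneg hβ hγ).eq_or_lt with hβγ | hβγ
  · obtain ⟨rfl, rfl⟩ : β = 0 ∧ γ = 0 := ⟨by linarith, by linarith⟩
    simpa [show α = 1 by linarith] using hx
  have hm : (β / (β + γ)) • u + (γ / (β + γ)) • w ∈ K :=
    hK hu hw (by positivity) (by positivity) (by rw [← add_div, div_self hβγ.ne'])
  convert hK.combo_interior_self_mem_interior hx hm hα hβγ.le (by linarith) using 1
  rw [smul_add, smul_smul, smul_smul, mul_div_cancel₀ _ hβγ.ne', mul_div_cancel₀ _ hβγ.ne',
    add_assoc]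

section Triangle

variable {x u w : Pt}

lemma mem_interior_of_bary_nonneg {K : Set Pt} (hK : Convex ℝ K) (hD : det3 x u w ≠ 0)
    (hx : x ∈ interior K) (hu : u ∈ K) (hw : w ∈ K) {y : Pt} (hyx : 0 < bary x u w y)
    (hyu : 0 ≤ bary u w x y) (hyw : 0 ≤ bary w x u y) : y ∈ interior K := by
  rw [← bary_smul_add_bary_smul_add_bary_smul hD y]
  exact hK.smul_add_smul_add_smul_mem_interior hx hu hw hyx hyu hyw (bary_add_bary_add_bary hD y)

lemma mem_segment_of_bary_eq_zero (hD : det3 x u w ≠ 0) {y : Pt} (hyw : bary w x u y = 0)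
    (hyx : 0 ≤ bary x u w y) (hyu : 0 ≤ bary u w x y) : y ∈ segment ℝ x u := by
  refine ⟨bary x u w y, bary u w x y, hyx, hyu, ?_, ?_⟩
  · simpa [hyw] using bary_add_bary_add_bary hD y
  · simpa [hyw] using bary_smul_add_bary_smul_add_bary_smul hD y

lemma triangle_exit (hD : det3 x u w ≠ 0) {z a : Pt} (hz : z ∈ openSegment ℝ u w)
    (ha : 0 < bary x u w a) :
    (0 ≤ bary u w x a ∧ 0 ≤ bary w x u a) ∨
    (bary u w x a < 0 ∧ ∃ y ∈ openSegment ℝ z a, y ∈ segment ℝ x w ∧ y ≠ w) ∨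
    (∃ y ∈ openSegment ℝ z a, y ∈ segment ℝ x u ∧ y ≠ x) := by
  have hD₁ : det3 u w x ≠ 0 := by rwa [← det3_rotate]
  have hD₂ : det3 w x u ≠ 0 := by rwa [← det3_rotate, ← det3_rotate]
  obtain ⟨g, g', hg, hg', hgg', rfl⟩ := hz
  have hzx : bary x u w (g • u + g' • w) = 0 := by simp [bary_combo _ _ _ _ _ hgg']
  have hzu : bary u w x (g • u + g' • w) = g := by simp [bary_combo _ _ _ _ _ hgg', bary_self hD₁]
  have hzw : bary w x u (g • u + g' • w) = g' := by simp [bary_combo _ _ _ _ _ hgg', bary_self hD₂]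
  set z := g • u + g' • w
  have hpath : ∀ t : ℝ, bary x u w ((1 - t) • z + t • a) = t * bary x u w a := fun t => by
    simp [bary_combo _ _ _ _ _ (sub_add_cancel 1 t), hzx]
  have hyz : ∀ t ∈ Ioo (0 : ℝ) 1, (1 - t) • z + t • a ∈ openSegment ℝ z a := fun t ht =>
    ⟨1 - t, t, by linarith [ht.2], ht.1, by ring, rfl⟩
  rcases quadrant_exit (hzu ▸ hg) (hzw ▸ hg') with h | ⟨hua, t, ht, hu0, hw0⟩ | ⟨t, ht, hw0, hu0⟩
  · exact Or.inl h
  · rw [← bary_combo _ _ _ _ _ (sub_add_cancel 1 t)] at hu0 hw0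
    have hpos : 0 < bary x u w ((1 - t) • z + t • a) := by rw [hpath]; exact mul_pos ht.1 ha
    refine Or.inr (Or.inl ⟨hua, _, hyz t ht, ?_, fun h => by simp [h] at hpos⟩)
    rw [segment_symm]
    exact mem_segment_of_bary_eq_zero hD₂ hu0 hw0 hpos.le
  · rw [← bary_combo _ _ _ _ _ (sub_add_cancel 1 t)] at hu0 hw0
    have hpos : 0 ≤ bary x u w ((1 - t) • z + t • a) := by
      rw [hpath]; exact mul_nonneg ht.1.le ha.le
    exact Or.inr (Or.inr ⟨_, hyz t ht, mem_segment_of_bary_eq_zero hD hw0 hpos hu0.le,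
      fun h => by simp [h] at hu0⟩)

end Triangle

namespace ConvexPos

variable {P : Set Pt} {q p1 p2 p3 x : Pt}

lemma det3_ne_zero_of_segCross_of_mem_openSegment (hP : ConvexPos P) (hp1 : p1 ∈ P)
    (hp2 : p2 ∈ P) (hp3 : p3 ∈ P) (hxc : SegCross q p1 p2 p3) (hq1 : q ≠ p1)
    (hx2 : x ∈ openSegment ℝ p2 p3) (hx3 : x ≠ p3) : det3 x p1 p3 ≠ 0 := by
  intro h
  have hp1' : p1 ∉ segment ℝ p2 p3 := hxc.swap_left.left_notMem_segment hq1.symm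
  have hp12 : p1 ≠ p2 := fun h => hp1' (h ▸ left_mem_segment ℝ p2 p3)
  have hp13 : p1 ≠ p3 := fun h => hp1' (h ▸ right_mem_segment ℝ p2 p3)
  have hp23 : p2 ≠ p3 := by
    rintro rfl
    exact hx3 (by simpa using hx2)
  have hx32 : det3 x p3 p2 = 0 := by
    rw [det3_swap, det3_rotate, det3_eq_zero_of_mem_segment (openSegment_subset_segment ℝ _ _ hx2),
      neg_zero]
  have hx31 : det3 x p3 p1 = 0 := by rw [det3_swap, h, neg_zero]
  exact hP.det3_ne_zero hp3 hp1 hp2 hp13.symm hp23.symm hp12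
    (det3_eq_zero_of_det3_eq_zero hx3 hx31 hx32)

lemma disjoint_openSegment_of_bary_pos (hP : ConvexPos P) {a b : Pt} (hp1 : p1 ∈ P)
    (hp3 : p3 ∈ P) (ha : a ∈ P) (hxint : x ∈ interior (convexHull ℝ P))
    (hx1 : x ∈ segment ℝ q p1) (hx2 : x ∈ openSegment ℝ p2 p3) (hD : det3 x p1 p3 ≠ 0)
    (hnc : ¬ SegCross a b p2 p3)
    (hfar : ∀ y ∈ segment ℝ q p1, y ∈ segment ℝ a b → dist q y ≤ dist q x)
    (hpos : 0 < bary x p1 p3 a) :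
    Disjoint (openSegment ℝ p1 p3) (openSegment ℝ a b) := by
  refine Set.disjoint_left.2 fun z hz13 hzab => ?_
  rcases triangle_exit hD hz13 hpos with
    ⟨hp1a, hp3a⟩ | ⟨hp1a, y, hy, hyx3, hy3⟩ | ⟨y, hy, hyx1, hyx⟩
  · exact hP.notMem_interior_convexHull ha <| mem_interior_of_bary_nonneg (convex_convexHull ℝ P)
      hD hxint (subset_convexHull ℝ P hp1) (subset_convexHull ℝ P hp3) hpos hp1a hp3a
  · have hp23 : p2 ≠ p3 := by
      rintro rfl
      obtain rfl : x = p2 := by simpa using hx2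
      simp at hD
    have h23a : det3 p2 p3 a = 0 := det3_eq_zero_of_not_segCross
      (openSegment_subset_openSegment_of_mem hzab hy)
      (mem_openSegment_of_mem_segment_of_ne hx2 hyx3 hy3) hnc
    have h23x : det3 p2 p3 x = 0 :=
      det3_eq_zero_of_mem_segment (openSegment_subset_segment ℝ _ _ hx2)
    simp [bary, det3_eq_zero_of_det3_eq_zero hp23 h23x h23a] at hp1a
  · obtain ⟨hyq, hlt⟩ := dist_lt_dist_of_mem_segment hx1 hyx1 hyx
    exact (hfar y hyq (openSegment_subset_segment ℝ a b
      (openSegment_subset_openSegment_of_mem hzab hy))).not_gt hlt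

lemma not_segCross_of_farthest (hP : ConvexPos P) {a b : Pt} (hp1 : p1 ∈ P) (hp2 : p2 ∈ P)
    (hp3 : p3 ∈ P) (hq : q ∈ interior (convexHull ℝ P)) (hx1 : x ∈ openSegment ℝ q p1)
    (hx2 : x ∈ openSegment ℝ p2 p3) (hxc : SegCross q p1 p2 p3) (ha : a ∈ P) (hb : b ∈ P)
    (hnc : ¬ SegCross a b p2 p3)
    (hfar : ∀ y ∈ segment ℝ q p1, y ∈ segment ℝ a b → dist q y ≤ dist q x) :
    ¬ SegCross p1 p3 a b := by
  have hxint : x ∈ interior (convexHull ℝ P) := (convex_convexHull ℝ P)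
    |>.openSegment_interior_self_subset_interior hq (subset_convexHull ℝ P hp1) hx1
  have hq1 : q ≠ p1 := fun h => hP.notMem_interior_convexHull hp1 (h ▸ hq)
  have hx3 : x ≠ p3 := fun h => hP.notMem_interior_convexHull hp3 (h ▸ hxint)
  have hD := hP.det3_ne_zero_of_segCross_of_mem_openSegment hp1 hp2 hp3 hxc hq1 hx2 hx3
  have hp13 : p1 ≠ p3 := by
    rintro rfl
    simp at hD
  have hx1' := openSegment_subset_segment ℝ q p1 hx1
  intro hcross
  obtain ⟨z, hz13, hzab, -⟩ := id hcross
  have ha0 : bary x p1 p3 a ≠ 0 :=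
    div_ne_zero (hP.det3_ne_zero_of_segCross hp1 hp3 ha hp13 hcross) hD
  have hb0 : bary x p1 p3 b ≠ 0 :=
    div_ne_zero (hP.det3_ne_zero_of_segCross hp1 hp3 hb hp13 hcross.swap_right) hD
  -- `z` lies on the line `p1 p3`, so `a` and `b` lie on opposite sides of it
  obtain ⟨s, t, hs, ht, hst, rfl⟩ := id hzab
  have hz : s * bary x p1 p3 a + t * bary x p1 p3 b = 0 := by
    rw [← bary_combo _ _ _ _ _ hst, bary,
      det3_eq_zero_of_mem_segment (openSegment_subset_segment ℝ _ _ hz13), zero_div]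
  rcases ha0.lt_or_gt with hA | hA
  · have hB : 0 < bary x p1 p3 b := by nlinarith
    refine Set.disjoint_left.1 (hP.disjoint_openSegment_of_bary_pos hp1 hp3 hb hxint hx1' hx2 hD
      (fun h => hnc h.swap_left) (fun y hy hyba => hfar y hy (segment_symm ℝ a b ▸ hyba)) hB)
      hz13 (openSegment_symm ℝ a b ▸ hzab)
  · exact Set.disjoint_left.1 (hP.disjoint_openSegment_of_bary_pos hp1 hp3 ha hxint hx1' hx2 hD
      hnc hfar hA) hz13 hzab

end ConvexPos

/-- Flipping the segment `q p1` (with `q` strictly inside the convex hull of `C`)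
with the `CC`-segment `p2p3` crossing it farthest from `q`, in a configuration
with no pair of crossing `CC`-segments, inserts a `CC`-segment (`p1p3` or `p1p2`)
that crosses no segment of the resulting set. -/
theorem farthest_flip_inserts_crossingfree_CC_segment
    (C : Finset Pt) (hC : ConvexPos (C : Set Pt))
    (q p1 p2 p3 : Pt) (hp1 : p1 ∈ C) (hp2 : p2 ∈ C) (hp3 : p3 ∈ C)
    (hq : q ∈ interior (convexHull ℝ (C : Set Pt)))
    (S : Finset (Pt × Pt)) (hends : ∀ e ∈ S, e.1 ∈ C ∧ e.2 ∈ C)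
    (hfree : ∀ e ∈ S, ∀ e' ∈ S, ¬ SegCross e.1 e.2 e'.1 e'.2)
    (h23 : (p2, p3) ∈ S)
    (x : Pt) (hx1 : x ∈ openSegment ℝ q p1) (hx2 : x ∈ openSegment ℝ p2 p3)
    (hxc : SegCross q p1 p2 p3)
    (hfar : ∀ e ∈ S, ∀ y : Pt, y ∈ segment ℝ q p1 → y ∈ segment ℝ e.1 e.2 →
      dist q y ≤ dist q x) :
    (¬ SegCross q p2 p1 p3 →
      ∀ e ∈ insert (q, p2) (S.erase (p2, p3)), ¬ SegCross p1 p3 e.1 e.2) ∧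
    (¬ SegCross q p3 p1 p2 →
      ∀ e ∈ insert (q, p3) (S.erase (p2, p3)), ¬ SegCross p1 p2 e.1 e.2) := by
  have flip_side : ∀ {u v : Pt}, u ∈ C → v ∈ C → x ∈ openSegment ℝ u v → SegCross q p1 u v →
      (∀ e ∈ S, ¬ SegCross e.1 e.2 u v) → ¬ SegCross q u p1 v →
      ∀ e ∈ insert (q, u) (S.erase (p2, p3)), ¬ SegCross p1 v e.1 e.2 := by
    intro u v hu hv hxuv hxc' hnc hqu e he
    rcases Finset.mem_insert.1 he with rfl | he
    · exact fun h => hqu h.symm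
    have heS := (Finset.mem_erase.1 he).2
    exact hC.not_segCross_of_farthest hp1 hu hv hq hx1 hxuv hxc' (hends e heS).1 (hends e heS).2
      (hnc e heS) (hfar e heS)
  exact ⟨flip_side hp2 hp3 hx2 hxc fun e he => hfree e he _ h23,
    flip_side hp3 hp2 (openSegment_symm ℝ p2 p3 ▸ hx2) hxc.swap_right
      fun e he h => hfree e he _ h23 h.swap_right⟩
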